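/- arXiv:2012.03765 — 4 statements merged into one kernel-verified Lean document; each statement's English description precedes it below -/
import Mathlib

section
/- Let X be a metric space, c ≥ 2, r : ℝ, D and D* multisets over X × Fin c, and x : X. Then for every label l ∈ Fin c, the vote counts among rNN neighbors satisfy s_l(N_r(D,x)) − S(D,D*) ≤ s_l(N_r(D*,x)) ≤ s_l(N_r(D,x)) + S(D,D*); in particular, each poisoned training example changes each label's vote count among the rNN neighbors by at most one. -/
/-- Poisoning size between two multisets: `max (card A) (card B) - card (A ∩ B)`. -/
noncomputable def pSize {α : Type*} (A B : Multiset α) : ℕ :=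
  haveI := Classical.decEq α
  max A.card B.card - (A ∩ B).card

/-- Number of votes for label `l` in a multiset of labeled examples (counted with
multiplicity). -/
def votes {X : Type*} {c : ℕ} (T : Multiset (X × Fin c)) (l : Fin c) : ℕ :=
  T.countP (fun p => p.2 = l)

/-- Tie-broken majority label: the largest label (in the order of `Fin c`) among the
labels attaining the maximum vote count. -/
noncomputable def majLabel {X : Type*} {c : ℕ} (hc : 0 < c) (T : Multiset (X × Fin c)) :
    Fin c :=
  (Finset.univ.filter (fun l : Fin c => ∀ l', votes T l' ≤ votes T l)).max'
    (by
      haveI : NeZero c := ⟨hc.ne'⟩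
      obtain ⟨b, -, hb⟩ := Finset.exists_max_image (Finset.univ : Finset (Fin c)) (votes T)
        Finset.univ_nonempty
      exact ⟨b, Finset.mem_filter.mpr ⟨Finset.mem_univ b, fun l' => hb l' (Finset.mem_univ l')⟩⟩)

/-- The largest label, among those `l ≠ a`, attaining the maximum of `s l` over `l ≠ a`. -/
noncomputable def secondLabel {c : ℕ} (hc : 2 ≤ c) (s : Fin c → ℕ) (a : Fin c) : Fin c :=
  (Finset.univ.filter (fun l : Fin c => l ≠ a ∧ ∀ l', l' ≠ a → s l' ≤ s l)).max'
    (by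
      have h1 : 1 < Fintype.card (Fin c) := by rw [Fintype.card_fin]; omega
      obtain ⟨l0, hl0⟩ := Fintype.exists_ne_of_one_lt_card h1 a
      have hne : (Finset.univ.filter (fun l : Fin c => l ≠ a)).Nonempty :=
        ⟨l0, Finset.mem_filter.mpr ⟨Finset.mem_univ _, hl0⟩⟩
      obtain ⟨b, hb, hbmax⟩ := Finset.exists_max_image _ s hne
      refine ⟨b, Finset.mem_filter.mpr ⟨Finset.mem_univ _, (Finset.mem_filter.mp hb).2, ?_⟩⟩
      intro l' hl'
      exact hbmax l' (Finset.mem_filter.mpr ⟨Finset.mem_univ _, hl'⟩))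

/-- rNN neighbor multiset: training examples within distance `r` of the test input `x`. -/
noncomputable def Nr {X : Type*} [MetricSpace X] {c : ℕ} (r : ℝ)
    (D : Multiset (X × Fin c)) (x : X) : Multiset (X × Fin c) :=
  haveI : DecidablePred (fun p : X × Fin c => dist p.1 x ≤ r) := Classical.decPred _
  D.filter (fun p => dist p.1 x ≤ r)

open Multiset

theorem pSize_eq_max_card_sub_card_inter {α : Type*} [DecidableEq α] (A B : Multiset α) :
    pSize A B = max (card A) (card B) - card (A ∩ B) := by
  unfold pSize
  congr!

theorem pSize_comm {α : Type*} (A B : Multiset α) : pSize A B = pSize B A := by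
  classical
  rw [pSize_eq_max_card_sub_card_inter, pSize_eq_max_card_sub_card_inter, max_comm, inter_comm]

theorem countP_le_countP_add_pSize {α : Type*} (p : α → Prop) [DecidablePred p]
    (A B : Multiset α) : countP p A ≤ countP p B + pSize A B := by
  classical
  have hinter : A ∩ B ≤ A := inter_le_left
  calc countP p A = countP p (A - A ∩ B) + countP p (A ∩ B) := by
        rw [← countP_add, tsub_add_cancel_of_le hinter]
    _ ≤ card (A - A ∩ B) + countP p B :=
        add_le_add (countP_le_card _ _) (countP_le_of_le _ inter_le_right)
    _ = card A - card (A ∩ B) + countP p B := by rw [card_sub hinter]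
    _ ≤ countP p B + pSize A B := by
        have := le_max_left (card A) (card B)
        rw [pSize_eq_max_card_sub_card_inter]
        omega

theorem votes_Nr {X : Type*} [MetricSpace X] {c : ℕ} (r : ℝ) (D : Multiset (X × Fin c))
    (x : X) (l : Fin c) :
    votes (Nr r D x) l = countP (fun p => p.2 = l ∧ dist p.1 x ≤ r) D := by
  simp only [votes, Nr]
  rw [countP_filter]

theorem votes_Nr_le_add_pSize {X : Type*} [MetricSpace X] {c : ℕ} (r : ℝ)
    (D Dstar : Multiset (X × Fin c)) (x : X) (l : Fin c) :
    votes (Nr r D x) l ≤ votes (Nr r Dstar x) l + pSize D Dstar := by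
  simpa only [votes_Nr] using countP_le_countP_add_pSize _ D Dstar

theorem rnn_votes_stable_general {X : Type*} [MetricSpace X] {c : ℕ} (r : ℝ)
    (D Dstar : Multiset (X × Fin c)) (x : X) (l : Fin c) :
    (votes (Nr r D x) l : ℤ) - (pSize D Dstar : ℤ) ≤ (votes (Nr r Dstar x) l : ℤ) ∧
      (votes (Nr r Dstar x) l : ℤ) ≤ (votes (Nr r D x) l : ℤ) + (pSize D Dstar : ℤ) := by
  have hD := votes_Nr_le_add_pSize r D Dstar x l
  have hDstar := votes_Nr_le_add_pSize r Dstar D x l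
  rw [pSize_comm] at hDstar
  omega

/-- each label's vote count among the rNN neighbors changes by at most the
poisoning size `S(D,D*)`. -/
theorem rnn_votes_stable {X : Type*} [MetricSpace X] {c : ℕ} (hc : 2 ≤ c) (r : ℝ)
    (D Dstar : Multiset (X × Fin c)) (x : X) (l : Fin c) :
    (votes (Nr r D x) l : ℤ) - (pSize D Dstar : ℤ) ≤ (votes (Nr r Dstar x) l : ℤ) ∧
      (votes (Nr r Dstar x) l : ℤ) ≤ (votes (Nr r D x) l : ℤ) + (pSize D Dstar : ℤ) :=
  rnn_votes_stable_general r D Dstar x l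
end

section
/- Let X be a metric space, c ≥ 2, k a natural number, ρ : X × Fin c → ℕ injective, and x : X. For all multisets D and D' over X × Fin c, the kNN neighbor multisets satisfy S(N_k(D,x), N_k(D',x)) ≤ S(D, D'). -/
/-- The kNN ordering w.r.t. a test input `x`, with ties broken by the ranking `ρ`
(larger ranks first): `p` precedes `q` iff `dist p.1 x < dist q.1 x`, or
`dist p.1 x = dist q.1 x` and `ρ p ≥ ρ q`. -/
def knnLE {X : Type*} [MetricSpace X] {c : ℕ} (ρ : X × Fin c → ℕ) (x : X)
    (p q : X × Fin c) : Prop :=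
  dist p.1 x < dist q.1 x ∨ (dist p.1 x = dist q.1 x ∧ ρ q ≤ ρ p)

/-- kNN neighbor multiset: the first `min k (card D)` elements of `D` in the order
`knnLE ρ x` (sort `D` by this order and take the first `k`). -/
noncomputable def Nk {X : Type*} [MetricSpace X] {c : ℕ} {ρ : X × Fin c → ℕ}
    (hρ : Function.Injective ρ) (k : ℕ) (D : Multiset (X × Fin c)) (x : X) :
    Multiset (X × Fin c) :=
  haveI : DecidableRel (knnLE ρ x) := Classical.decRel _
  haveI : IsTrans _ (knnLE ρ x) := ⟨by
    rintro p q s (h1 | ⟨h1, h1'⟩) (h2 | ⟨h2, h2'⟩)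
    · exact Or.inl (h1.trans h2)
    · exact Or.inl (h1.trans_eq h2)
    · exact Or.inl (h1.trans_lt h2)
    · exact Or.inr ⟨h1.trans h2, h2'.trans h1'⟩⟩
  haveI : IsAntisymm _ (knnLE ρ x) := ⟨by
    rintro p q (h1 | ⟨h1, h1'⟩) (h2 | ⟨h2, h2'⟩)
    · exact absurd h2 (lt_asymm h1)
    · exact absurd h2.symm h1.ne
    · exact absurd h1.symm h2.ne
    · exact hρ (le_antisymm h2' h1')⟩
  haveI : IsTotal _ (knnLE ρ x) := ⟨by
    intro p q
    rcases lt_trichotomy (dist p.1 x) (dist q.1 x) with h | h | h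
    · exact Or.inl (Or.inl h)
    · rcases le_total (ρ q) (ρ p) with h' | h'
      · exact Or.inl (Or.inr ⟨h, h'⟩)
      · exact Or.inr (Or.inr ⟨h.symm, h'⟩)
    · exact Or.inr (Or.inl h)⟩
  (↑((D.sort (knnLE ρ x)).take k) : Multiset (X × Fin c))

/-!
Write `pSize A B = max |A - B| |B - A|`. For lists `l, l'` sorted by a linear order, walk
both from the front: equal heads cancel, and a strictly smaller head does not occur in the
other list at all, so it counts on both sides or on neither. This gives
`|take i l - take j l'| ≤ |l - l'| + ((|l'| + i) - (|l| + j))` (truncated subtraction),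
and for `i = j = k` the right-hand side is `max |l - l'| |l' - l|` because
`|l - l'| + |l'| = |l' - l| + |l|`.
-/

namespace Multiset

variable {α : Type*} [DecidableEq α]

theorem card_sub_add_card_comm (s t : Multiset α) :
    card (s - t) + card t = card (t - s) + card s := by
  rw [← card_add, ← card_add, ← union_def, ← union_def, union_comm]

theorem card_sub_eq_card_sub_card_inter (s t : Multiset α) :
    card (s - t) = card s - card (s ∩ t) := by
  rw [← sub_inter, card_sub inter_le_left]

end Multiset

theorem pSize_eq_max_card_sub {α : Type*} [inst : DecidableEq α] (A B : Multiset α) :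
    pSize A B = max (A - B).card (B - A).card := by
  have hA := Multiset.card_sub_eq_card_sub_card_inter A B
  have hB := Multiset.card_sub_eq_card_sub_card_inter B A
  have hAB : (A ∩ B).card ≤ A.card := Multiset.card_le_card Multiset.inter_le_left
  have hBA : (A ∩ B).card ≤ B.card := Multiset.card_le_card Multiset.inter_le_right
  rw [Multiset.inter_comm] at hB
  unfold pSize
  obtain rfl : Classical.decEq α = inst := Subsingleton.elim _ _
  omega

namespace List

theorem Pairwise.notMem_of_rel_head {α : Type*} {r : α → α → Prop} [Std.Antisymm r]
    {a b : α} {l : List α}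
    (hl : (b :: l).Pairwise r) (hab : r a b) (hne : a ≠ b) : a ∉ b :: l := by
  rintro (_ | ⟨_, hal⟩)
  · exact hne rfl
  · exact hne (antisymm hab (rel_of_pairwise_cons hl hal))

variable {α : Type*} [DecidableEq α]

theorem length_le_length_diff_add_length (l l' : List α) :
    l.length ≤ (l.diff l').length + l'.length := by
  have := Multiset.card_sub_add_card_comm (l : Multiset α) l'
  simp only [Multiset.coe_sub, Multiset.coe_card] at this
  omega

theorem length_diff_take_le {r : α → α → Prop} [Std.Antisymm r] [Std.Total r] :
    ∀ {l l' : List α}, l.Pairwise r → l'.Pairwise r → ∀ i j : ℕ,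
      ((l.take i).diff (l'.take j)).length ≤
        (l.diff l').length + (l'.length + i - (l.length + j))
  | _, _, _, _, 0, _ => by simp
  | [], _, _, _, _ + 1, _ => by simp
  | l, l', _, _, i, 0 => by
      have := length_le_length_diff_add_length l l'
      simp only [take_zero, diff_nil, length_take]
      omega
  | a :: l, [], _, _, i + 1, j + 1 => by
      simp only [take_nil, diff_nil, length_take, length_cons]
      omega
  | a :: l, b :: l', hl, hl', i + 1, j + 1 => by
      rcases eq_or_ne a b with rfl | hne
      · have := length_diff_take_le hl.of_cons hl'.of_cons i j
        simp only [take_succ_cons, cons_diff_of_mem mem_cons_self, erase_cons_head,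
          length_cons]
        omega
      rcases Std.Total.total (r := r) a b with hab | hba
      · have ha := hl'.notMem_of_rel_head hab hne
        have := length_diff_take_le hl.of_cons hl' i (j + 1)
        rw [take_succ_cons, cons_diff_of_not_mem (fun h => ha (mem_of_mem_take h)),
          cons_diff_of_not_mem ha]
        simp only [length_cons] at this ⊢
        omega
      · have hb := hl.notMem_of_rel_head hba hne.symm
        have := length_diff_take_le hl hl'.of_cons (i + 1) j
        rw [take_succ_cons (a := b), diff_cons, diff_cons,
          erase_of_not_mem (fun h => hb (mem_of_mem_take h)), erase_of_not_mem hb, length_cons]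
        omega
  termination_by l l' => l.length + l'.length

end List

theorem pSize_coe_take_le {α : Type*} {r : α → α → Prop} [Std.Antisymm r] [Std.Total r]
    {l l' : List α} (hl : l.Pairwise r) (hl' : l'.Pairwise r) (k : ℕ) :
    pSize (l.take k : Multiset α) (l'.take k) ≤ pSize (l : Multiset α) l' := by
  classical
  have h₁ := List.length_diff_take_le hl hl' k k
  have h₂ := List.length_diff_take_le hl' hl k k
  have hc := Multiset.card_sub_add_card_comm (l : Multiset α) l'
  simp only [pSize_eq_max_card_sub, Multiset.coe_sub, Multiset.coe_card] at hc ⊢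
  omega

theorem pSize_take_sort_le {α : Type*} (r : α → α → Prop) [DecidableRel r] [IsTrans α r]
    [Std.Antisymm r] [Std.Total r] (k : ℕ) (D D' : Multiset α) :
    pSize ((D.sort r).take k : Multiset α) ((D'.sort r).take k) ≤ pSize D D' := by
  simpa only [Multiset.sort_eq] using
    pSize_coe_take_le (Multiset.pairwise_sort D r) (Multiset.pairwise_sort D' r) k

section knnLE

variable {X : Type*} [MetricSpace X] {c : ℕ} (ρ : X × Fin c → ℕ) (x : X)

instance : IsTrans _ (knnLE ρ x) where
  trans := by
    rintro p q s (h₁ | ⟨h₁, h₁'⟩) (h₂ | ⟨h₂, h₂'⟩)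
    · exact Or.inl (h₁.trans h₂)
    · exact Or.inl (h₁.trans_eq h₂)
    · exact Or.inl (h₁.trans_lt h₂)
    · exact Or.inr ⟨h₁.trans h₂, h₂'.trans h₁'⟩

instance : Std.Total (knnLE ρ x) where
  total p q := by
    rcases lt_trichotomy (dist p.1 x) (dist q.1 x) with h | h | h
    · exact Or.inl (Or.inl h)
    · exact (le_total (ρ q) (ρ p)).imp (fun h' => Or.inr ⟨h, h'⟩)
        (fun h' => Or.inr ⟨h.symm, h'⟩)
    · exact Or.inr (Or.inl h)

variable {ρ} in
theorem knnLE_antisymm (hρ : Function.Injective ρ) : Std.Antisymm (knnLE ρ x) where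
  antisymm := by
    rintro p q (h₁ | ⟨h₁, h₁'⟩) (h₂ | ⟨h₂, h₂'⟩)
    · exact absurd h₂ h₁.asymm
    · exact absurd h₂.symm h₁.ne
    · exact absurd h₁.symm h₂.ne
    · exact hρ (le_antisymm h₂' h₁')

end knnLE

theorem knn_neighbors_pSize_le_general {X : Type*} [MetricSpace X] {c : ℕ}
    (k : ℕ) {ρ : X × Fin c → ℕ} (hρ : Function.Injective ρ) (x : X)
    (D D' : Multiset (X × Fin c)) :
    pSize (Nk hρ k D x) (Nk hρ k D' x) ≤ pSize D D' := by
  have := knnLE_antisymm x hρ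
  classical
  exact pSize_take_sort_le (knnLE ρ x) k D D'

/-- the poisoning size between the kNN neighbor multisets is at most the
poisoning size between the training datasets. -/
theorem knn_neighbors_pSize_le {X : Type*} [MetricSpace X] {c : ℕ} (hc : 2 ≤ c)
    (k : ℕ) {ρ : X × Fin c → ℕ} (hρ : Function.Injective ρ) (x : X)
    (D D' : Multiset (X × Fin c)) :
    pSize (Nk hρ k D x) (Nk hρ k D' x) ≤ pSize D D' :=
  knn_neighbors_pSize_le_general k hρ x D D'
end

section
/- Let X be a metric space, c ≥ 2, r : ℝ, D and D* multisets over X × Fin c, and let x_1,…,x_m : X be test inputs whose rNN predicted labels a_i := rNN_r(D,x_i) are pairwise distinct. Then the total number of removed neighbors carrying the corresponding predicted labels is bounded by the poisoning size: Σ_{i=1}^m s_{a_i}(N_r(D,x_i) − N_r(D*,x_i)) ≤ S(D,D*), where − denotes multiset difference. -/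
/-- Multiset difference (with classical decidable equality). -/
noncomputable def mdiff {α : Type*} (A B : Multiset α) : Multiset α :=
  haveI := Classical.decEq α
  A - B

/-- rNN prediction: tie-broken majority label among the rNN neighbors. -/
noncomputable def rNNpred {X : Type*} [MetricSpace X] {c : ℕ} (hc : 0 < c) (r : ℝ)
    (D : Multiset (X × Fin c)) (x : X) : Fin c :=
  majLabel hc (Nr r D x)


/-! The removed neighbours of `xs i` lie in `D - Dstar`, and those counted in the `i`-th summand
carry the label `a i`; as the labels are distinct, the summands count disjoint parts of
`D - Dstar`, whose size is at most the poisoning size. -/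

open Finset

section Votes

variable {X : Type*} {c : ℕ}

lemma votes_le_votes_of_le {S T : Multiset (X × Fin c)} (h : S ≤ T) (l : Fin c) :
    votes S l ≤ votes T l :=
  Multiset.countP_le_of_le _ h

lemma votes_eq_count_map_snd (T : Multiset (X × Fin c)) (l : Fin c) :
    votes T l = (T.map Prod.snd).count l := by
  rw [votes, Multiset.count_map, Multiset.countP_eq_card_filter]
  simp only [eq_comm]

lemma sum_votes_eq_card (T : Multiset (X × Fin c)) : ∑ l, votes T l = Multiset.card T := by
  simp only [votes_eq_count_map_snd]
  rw [Multiset.sum_count_eq_card fun l _ => mem_univ l, Multiset.card_map]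

lemma sum_votes_comp_le_card {ι : Type*} [Fintype ι] (T : Multiset (X × Fin c))
    {a : ι → Fin c} (ha : Function.Injective a) : ∑ i, votes T (a i) ≤ Multiset.card T :=
  calc ∑ i, votes T (a i)
      = ∑ l ∈ univ.image a, votes T l := (sum_image fun _ _ _ _ h => ha h).symm
    _ ≤ ∑ l, votes T l := sum_le_sum_of_subset (subset_univ _)
    _ = Multiset.card T := sum_votes_eq_card T

end Votes

lemma card_mdiff_le_pSize {α : Type*} (A B : Multiset α) :
    Multiset.card (mdiff A B) ≤ pSize A B := by
  classical
  have h : Multiset.card (A - B) = Multiset.card A - Multiset.card (A ∩ B) := by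
    rw [← Multiset.sub_inter, Multiset.card_sub Multiset.inter_le_left]
  unfold mdiff pSize
  convert h.trans_le (Nat.sub_le_sub_right (le_max_left _ _) _)

section Neighbors

variable {X : Type*} [MetricSpace X] {c : ℕ}

lemma Nr_le (r : ℝ) (D : Multiset (X × Fin c)) (x : X) : Nr r D x ≤ D :=
  Multiset.filter_le _ _

lemma mdiff_Nr (r : ℝ) (D D' : Multiset (X × Fin c)) (x : X) :
    mdiff (Nr r D x) (Nr r D' x) = Nr r (mdiff D D') x := by
  classical
  unfold mdiff Nr
  convert (Multiset.filter_sub _ D D').symm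

end Neighbors

/-- for test inputs whose rNN predicted labels are pairwise distinct, the
total number of removed neighbors carrying the corresponding predicted labels is bounded
by the poisoning size. -/
theorem rnn_total_removed_votes_le {X : Type*} [MetricSpace X] {c : ℕ}
    (r : ℝ) (D Dstar : Multiset (X × Fin c)) {m : ℕ} (xs : Fin m → X) (a : Fin m → Fin c)
    (hdist : Function.Injective a) :
    ∑ i, votes (mdiff (Nr r D (xs i)) (Nr r Dstar (xs i))) (a i) ≤ pSize D Dstar :=
  calc ∑ i, votes (mdiff (Nr r D (xs i)) (Nr r Dstar (xs i))) (a i)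
      = ∑ i, votes (Nr r (mdiff D Dstar) (xs i)) (a i) := by simp only [mdiff_Nr]
    _ ≤ ∑ i, votes (mdiff D Dstar) (a i) :=
        sum_le_sum fun i _ => votes_le_votes_of_le (Nr_le r _ (xs i)) (a i)
    _ ≤ Multiset.card (mdiff D Dstar) := sum_votes_comp_le_card _ hdist
    _ ≤ pSize D Dstar := card_mdiff_le_pSize D Dstar
end

section
/- (Theorem 3, joint certification for rNN) Let X be a metric space, c ≥ 2, r : ℝ, D a multiset over X × Fin c, e a natural number, and let (x_1,y_1),…,(x_m,y_m) be testing examples with x_i : X, y_i ∈ Fin c, whose rNN predicted labels a_i := rNN_r(D,x_i) are pairwise distinct. For each i let s_l^{(i)} := s_l(N_r(D,x_i)), let b_i be the largest label among those l ≠ a_i attaining the maximum of s_l^{(i)} over l ≠ a_i, and define c_i := 𝟙(a_i = y_i) · max(s_{a_i}^{(i)} − s_{b_i}^{(i)} − e + 𝟙(b_i < a_i), 0) ∈ ℕ. Assume the examples are ordered so that c_1 ≥ c_2 ≥ … ≥ c_m. Let w be the least natural number w' with 1 ≤ w' ≤ m+1 such that Σ_{i : w' ≤ i ≤ m} c_i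 ≤ e. Then for every multiset D* over X × Fin c with S(D,D*) ≤ e, the number of indices i with rNN_r(D*,x_i) = y_i is at least w − 1. -/
/-! If a test input with `a_i = y_i` is misclassified after poisoning, the new majority label
`a'` beats `a_i` in `N_r(D*, x_i)`, while `b_i` beats `a'` in `N_r(D, x_i)` (ties going to the
larger label). Passing from `D` to `D*` deletes `D - D*` and inserts `D* - D`, both of size at
most `e`, so the margin `s_{a_i} - s_{b_i} + 𝟙(b_i < a_i)` is at most `e` plus the number of
deleted examples labelled `a_i`: `c_i` is bounded by that number. The `a_i` being distinct,
the `c_i` of the misclassified inputs sum to at most `|D - D*| ≤ e`. As `c` is decreasing, a set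
of `m + 2 - w` indices would have `c`-sum at least that of the tail `{i ≥ w - 1}`, which exceeds
`e` by minimality of `w`; so fewer than `m + 2 - w` inputs are misclassified. -/

open Finset

section Labels

variable {X : Type*} {c : ℕ}

lemma votes_le_votes_majLabel (hc : 0 < c) (T : Multiset (X × Fin c)) (l : Fin c) :
    votes T l ≤ votes T (majLabel hc T) :=
  (mem_filter.mp (max'_mem (univ.filter fun l : Fin c => ∀ l', votes T l' ≤ votes T l) _)).2 l

lemma votes_add_ite_lt_le_majLabel (hc : 0 < c) (T : Multiset (X × Fin c)) (l : Fin c) :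
    votes T l + (if majLabel hc T < l then 1 else 0) ≤ votes T (majLabel hc T) := by
  have hle := votes_le_votes_majLabel hc T l
  split_ifs with hlt
  · refine Nat.lt_of_le_of_ne hle fun heq => hlt.not_ge (le_max' _ l ?_)
    exact mem_filter.mpr ⟨mem_univ l, fun l' => heq ▸ votes_le_votes_majLabel hc T l'⟩
  · exact hle

lemma le_secondLabel (hc : 2 ≤ c) (s : Fin c → ℕ) {a l : Fin c} (hl : l ≠ a) :
    s l ≤ s (secondLabel hc s a) := by
  unfold secondLabel
  exact (mem_filter.mp (max'_mem
    (univ.filter fun l : Fin c => l ≠ a ∧ ∀ l', l' ≠ a → s l' ≤ s l) _)).2.2 l hl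

lemma secondLabel_ne (hc : 2 ≤ c) (s : Fin c → ℕ) (a : Fin c) : secondLabel hc s a ≠ a := by
  unfold secondLabel
  exact (mem_filter.mp (max'_mem
    (univ.filter fun l : Fin c => l ≠ a ∧ ∀ l', l' ≠ a → s l' ≤ s l) _)).2.1

lemma add_ite_lt_le_secondLabel (hc : 2 ≤ c) (s : Fin c → ℕ) {a l : Fin c} (hl : l ≠ a) :
    s l + (if secondLabel hc s a < l then 1 else 0) ≤ s (secondLabel hc s a) := by
  have hle := le_secondLabel hc s hl
  split_ifs with hlt
  · refine Nat.lt_of_le_of_ne hle fun heq => hlt.not_ge (le_max' _ l ?_)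
    exact mem_filter.mpr ⟨mem_univ l, hl, fun l' hl' => heq ▸ le_secondLabel hc s hl'⟩
  · exact hle

lemma votes_add_votes_le_of_majLabel_ne (hc : 2 ≤ c) (hc₀ : 0 < c)
    {T T' : Multiset (X × Fin c)} {a b : Fin c} (hb : b = secondLabel hc (fun l => votes T l) a)
    (h : majLabel hc₀ T' ≠ a) :
    votes T' a + votes T (majLabel hc₀ T') + (if b < a then 1 else 0) ≤
      votes T' (majLabel hc₀ T') + votes T b := by
  set a' := majLabel hc₀ T'
  have hT' : votes T' a + (if a' < a then 1 else 0) ≤ votes T' a' :=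
    votes_add_ite_lt_le_majLabel hc₀ T' a
  have hT := add_ite_lt_le_secondLabel hc (fun l => votes T l) h
  rw [← hb] at hT
  have hord :
      (if b < a then 1 else 0) ≤ (if a' < a then 1 else 0) + (if b < a' then 1 else 0) := by
    split_ifs <;> omega
  omega

end Labels

section Poisoning

variable {α : Type*} [DecidableEq α]

lemma card_sub_le_pSize (A B : Multiset α) : Multiset.card (A - B) ≤ pSize A B := by
  rw [pSize, Subsingleton.elim (Classical.decEq α) ‹_›, ← Multiset.sub_inter,
    Multiset.card_sub Multiset.inter_le_left]
  exact Nat.sub_le_sub_right (le_max_left _ _) _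

lemma card_sub_le_pSize' (A B : Multiset α) : Multiset.card (B - A) ≤ pSize A B := by
  rw [pSize, Subsingleton.elim (Classical.decEq α) ‹_›, ← Multiset.sub_inter,
    Multiset.inter_comm, Multiset.card_sub Multiset.inter_le_right]
  exact Nat.sub_le_sub_right (le_max_right _ _) _

end Poisoning

lemma sum_countP_snd_le_card {α β ι : Type*} [DecidableEq β] (M : Multiset (α × β))
    {f : ι → β} (hf : Function.Injective f) (W : Finset ι) :
    ∑ i ∈ W, M.countP (·.2 = f i) ≤ Multiset.card M := by
  have hcount : ∀ l, M.countP (·.2 = l) = (M.map Prod.snd).count l := by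
    intro l
    rw [Multiset.count_map, Multiset.countP_eq_card_filter]
    simp_rw [eq_comm]
  calc ∑ i ∈ W, M.countP (·.2 = f i)
      = ∑ l ∈ W.map ⟨f, hf⟩, (M.map Prod.snd).count l := by simp [hcount]
    _ ≤ ∑ l ∈ W.map ⟨f, hf⟩ ∪ (M.map Prod.snd).toFinset, (M.map Prod.snd).count l :=
        sum_le_sum_of_subset subset_union_left
    _ = Multiset.card M := by
        rw [Multiset.sum_count_eq_card fun l hl => mem_union_right _ (Multiset.mem_toFinset.mpr hl),
          Multiset.card_map]

section NearestNeighbors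

variable {X : Type*} [MetricSpace X] {c : ℕ}

lemma Nr_le_add_sub [DecidableEq (X × Fin c)] (r : ℝ) (A B : Multiset (X × Fin c)) (x : X) :
    Nr r A x ≤ Nr r B x + (A - B) := by
  unfold Nr
  calc _ ≤ Multiset.filter (fun p : X × Fin c => dist p.1 x ≤ r) (B + (A - B)) :=
        Multiset.filter_le_filter _ le_add_tsub
    _ ≤ _ := by
        rw [Multiset.filter_add]
        gcongr
        exact Multiset.filter_le _ _

lemma votes_Nr_le_add_countP [DecidableEq (X × Fin c)] (r : ℝ) (A B : Multiset (X × Fin c))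
    (x : X) (l : Fin c) :
    votes (Nr r A x) l ≤ votes (Nr r B x) l + (A - B).countP (·.2 = l) := by
  unfold votes
  rw [← Multiset.countP_add]
  exact Multiset.countP_le_of_le _ (Nr_le_add_sub r A B x)

lemma votes_Nr_le_add_card [DecidableEq (X × Fin c)] (r : ℝ) (A B : Multiset (X × Fin c))
    (x : X) (l : Fin c) :
    votes (Nr r A x) l ≤ votes (Nr r B x) l + Multiset.card (A - B) :=
  (votes_Nr_le_add_countP r A B x l).trans (Nat.add_le_add_left (Multiset.countP_le_card _ _) _)

lemma votes_Nr_add_ite_le_of_rNNpred_ne [DecidableEq (X × Fin c)] (hc : 2 ≤ c) (hc₀ : 0 < c)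
    (r : ℝ) {D D' : Multiset (X × Fin c)} {x : X} {a b : Fin c}
    (hb : b = secondLabel hc (fun l => votes (Nr r D x) l) a) (h : rNNpred hc₀ r D' x ≠ a) :
    votes (Nr r D x) a + (if b < a then 1 else 0) ≤
      votes (Nr r D x) b + (D - D').countP (·.2 = a) + Multiset.card (D' - D) := by
  have hflip := votes_add_votes_le_of_majLabel_ne hc hc₀ hb h
  have hdel := votes_Nr_le_add_countP r D D' x a
  have hadd := votes_Nr_le_add_card r D' D x (rNNpred hc₀ r D' x)
  unfold rNNpred at hadd
  omega

end NearestNeighbors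

lemma sum_le_sum_of_isUpperSet {ι M : Type*} [LinearOrder ι] [AddCommMonoid M] [LinearOrder M]
    [IsOrderedAddMonoid M] [CanonicallyOrderedAdd M] {f : ι → M} (hf : Antitone f)
    {T W : Finset ι} (hT : IsUpperSet (T : Set ι)) (hcard : #T ≤ #W) :
    ∑ i ∈ T, f i ≤ ∑ i ∈ W, f i := by
  rw [← sum_inter_add_sum_sdiff T W, ← sum_inter_add_sum_sdiff W T, inter_comm]
  gcongr _ + ?_
  obtain he | hne := (T \ W).eq_empty_or_nonempty
  · simp [he]
  obtain ⟨j, hj, hmax⟩ := exists_max_image (T \ W) f hne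
  have hlow : ∀ i ∈ W \ T, f j ≤ f i := fun i hi =>
    hf (not_le.mp fun hji => (mem_sdiff.mp hi).2 (hT hji (mem_sdiff.mp hj).1)).le
  calc ∑ i ∈ T \ W, f i ≤ #(T \ W) • f j := sum_le_card_nsmul _ _ _ hmax
    _ ≤ #(W \ T) • f j := nsmul_le_nsmul_left zero_le (card_sdiff_le_card_sdiff_iff.mpr hcard)
    _ ≤ ∑ i ∈ W \ T, f i := card_nsmul_le_sum _ _ _ hlow

lemma card_add_le_of_isLeast_tail {m e w : ℕ} {f : Fin m → ℕ} (hf : Antitone f)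
    (hw : IsLeast {w' : ℕ | 1 ≤ w' ∧ w' ≤ m + 1 ∧
      ∑ i ∈ univ.filter (fun i : Fin m => w' ≤ (i : ℕ) + 1), f i ≤ e} w)
    {W : Finset (Fin m)} (hW : ∑ i ∈ W, f i ≤ e) : #W + w ≤ m + 1 := by
  obtain ⟨⟨hw₁, hwm, -⟩, hmin⟩ := hw
  have hWm : #W ≤ m := (card_le_univ W).trans (Fintype.card_fin m).le
  by_cases hw₂ : w ≤ 1
  · omega
  set T := univ.filter (fun i : Fin m => w - 1 ≤ (i : ℕ) + 1)
  have hT : e < ∑ i ∈ T, f i := by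
    by_contra! h
    have := hmin ⟨by omega, by omega, h⟩
    omega
  have hWT : #W < #T := by
    by_contra! h
    have hup : IsUpperSet (T : Set (Fin m)) := fun i j hij hi => by
      simp only [T, coe_filter, mem_univ, true_and, Set.mem_ofPred_eq] at hi ⊢
      exact hi.trans (Nat.succ_le_succ hij)
    exact hT.not_ge ((sum_le_sum_of_isUpperSet hf hup h).trans hW)
  have hcompl : univ.filter (fun i : Fin m => ¬ w - 1 ≤ (i : ℕ) + 1) =
      univ.filter (fun i : Fin m => (i : ℕ) < w - 2) := filter_congr fun i _ => by omega
  have hTcard : #T + #(univ.filter fun i : Fin m => ¬ w - 1 ≤ (i : ℕ) + 1) = m := by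
    have := card_filter_add_card_filter_not (s := univ) (fun i : Fin m => w - 1 ≤ (i : ℕ) + 1)
    rwa [card_univ, Fintype.card_fin] at this
  rw [hcompl, Fin.card_filter_val_lt] at hTcard
  omega

/-- Theorem 3, joint certification for rNN: for testing examples with
pairwise-distinct rNN predicted labels, ordered so that
`c_i = 𝟙(a_i = y_i) · max(s_{a_i} − s_{b_i} − e + 𝟙(b_i < a_i), 0)` is nonincreasing,
if `w` is the least `1 ≤ w' ≤ m + 1` with `∑_{i ≥ w'} c_i ≤ e` (1-based indexing), then
any poisoning of size at most `e` leaves at least `w − 1` testing examples correctly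
classified. -/
theorem rnn_joint_certification {X : Type*} [MetricSpace X] {c : ℕ} (hc : 2 ≤ c) (r : ℝ)
    (D : Multiset (X × Fin c)) (e : ℕ) {m : ℕ} (xs : Fin m → X) (ys : Fin m → Fin c)
    (a b : Fin m → Fin c) (cc : Fin m → ℕ)
    (hdist : Function.Injective a)
    (hb : ∀ i, b i = secondLabel hc (fun l => votes (Nr r D (xs i)) l) (a i))
    (hcc : ∀ i, (cc i : ℤ) = (if a i = ys i then 1 else 0) *
      max ((votes (Nr r D (xs i)) (a i) : ℤ) - (votes (Nr r D (xs i)) (b i) : ℤ) - (e : ℤ) +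
        if b i < a i then 1 else 0) 0)
    (hmono : Antitone cc)
    (w : ℕ)
    (hw : IsLeast {w' : ℕ | 1 ≤ w' ∧ w' ≤ m + 1 ∧
      ∑ i ∈ Finset.univ.filter (fun i : Fin m => w' ≤ (i : ℕ) + 1), cc i ≤ e} w)
    (Dstar : Multiset (X × Fin c)) (hD : pSize D Dstar ≤ e) :
    w - 1 ≤
      (Finset.univ.filter
        (fun i => rNNpred (by omega : 0 < c) r Dstar (xs i) = ys i)).card := by
  classical
  set W := univ.filter fun i => ¬ rNNpred (by omega : 0 < c) r Dstar (xs i) = ys i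
  have hcost : ∀ i ∈ W, cc i ≤ (D - Dstar).countP (·.2 = a i) := by
    intro i hi
    have hci := hcc i
    by_cases hy : a i = ys i
    · have hflip := votes_Nr_add_ite_le_of_rNNpred_ne hc (by omega) r (hb i)
        fun h => (mem_filter.mp hi).2 (h.trans hy)
      have hadd := (card_sub_le_pSize' D Dstar).trans hD
      rw [if_pos hy, one_mul] at hci
      zify at hflip hadd
      omega
    · rw [if_neg hy, zero_mul] at hci
      omega
  have hW : ∑ i ∈ W, cc i ≤ e := calc
    ∑ i ∈ W, cc i ≤ ∑ i ∈ W, (D - Dstar).countP (·.2 = a i) := sum_le_sum hcost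
    _ ≤ Multiset.card (D - Dstar) := sum_countP_snd_le_card _ hdist W
    _ ≤ e := (card_sub_le_pSize D Dstar).trans hD
  have hsplit :
      #(univ.filter fun i => rNNpred (by omega : 0 < c) r Dstar (xs i) = ys i) + #W = m := by
    have := card_filter_add_card_filter_not (s := univ)
      fun i => rNNpred (by omega : 0 < c) r Dstar (xs i) = ys i
    rwa [card_univ, Fintype.card_fin] at this
  have hWw := card_add_le_of_isLeast_tail hmono hw hW
  omega
end
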